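/- Let q, a, b, x, u, y ∈ ℂ with 0 < |q| < 1, |u| ≤ 1, |b y| < 1, x ≠ 0, 1 - a q^j x ≠ 0 for 0 ≤ j ≤ n - 1, and 1 - b q^j x ≠ 0 for all j ≥ 0, and let n ∈ ℕ. Then T(y D_q|u) applied to the function t ↦ (a t;q)_n/(b t;q)_n, evaluated at x, equals ((a x;q)_n/(b x;q)_n) · ∑_{i=0}^{n} (u q)^{C(i,2)} [n choose i]_q ((b x;q)_i (-a y)^i / ((a x;q)_i (b q^n x;q)_i)) · ∑_{m=0}^{∞} u^{C(m,2)} (q^n;q)_m (u^i b y)^m / ((q;q)_m (b q^{n+i} x;q)_m), all series converging absolutely. -/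

import Mathlib

/-- The finite q-shifted factorial (a;q)_n = ∏_{j=0}^{n-1} (1 - a q^j). -/
noncomputable def qPoch (q a : ℂ) (n : ℕ) : ℂ :=
  ∏ j ∈ Finset.range n, (1 - a * q ^ j)

/-- The q-binomial coefficient [n choose k]_q = (q;q)_n / ((q;q)_k (q;q)_{n-k}). -/
noncomputable def qBinom (q : ℂ) (n k : ℕ) : ℂ :=
  qPoch q q n / (qPoch q q k * qPoch q q (n - k))

/-- The q-differential operator: (D_q f)(x) = (f(x) - f(qx))/x. -/
noncomputable def Dq (q : ℂ) (f : ℂ → ℂ) : ℂ → ℂ :=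
  fun x => (f x - f (q * x)) / x

/-- The deformed q-exponential operator:
T(y D_q|u) f(x) = ∑_{m≥0} u^{C(m,2)} (y^m/(q;q)_m) (D_q^m f)(x). -/
noncomputable def Tq (q u y : ℂ) (f : ℂ → ℂ) (x : ℂ) : ℂ :=
  ∑' m : ℕ, u ^ (m.choose 2) * (y ^ m / qPoch q q m) * ((Dq q)^[m] f x)

/-!
Both factors of `(at;q)_n / (bt;q)_n` have closed-form iterated q-derivatives:
`D_q^k (at;q)_n = (-a)^k q^C(k,2) (q;q)_n / (q;q)_{n-k} (aq^k t;q)_{n-k}`, which vanishes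
for `k > n`, and `D_q^j (bt;q)_n⁻¹ = b^j (q^n;q)_j / (bt;q)_{n+j}`. The q-Leibniz rule
`D_q^m (fg)(x) = ∑_k [m,k]_q D_q^k f(x) D_q^{m-k} g(q^k x)` therefore writes the `m`-th term of
the operator series as a sum over `k ≤ min m n` of the `k`-th outer coefficient times the
`(m-k)`-th term of the `k`-th inner series. Each inner series converges by the ratio test (its
ratio is `u^m` times a factor tending to `u^k b y`), so the finite sum over `k` can be exchanged
with the sum over `m`.
-/

open Filter Topology

lemma choose_two_succ (m : ℕ) : (m + 1).choose 2 = m.choose 2 + m := by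
  simp [Nat.choose_succ_succ', add_comm]

lemma choose_two_add (k m : ℕ) : (k + m).choose 2 = k.choose 2 + m.choose 2 + k * m := by
  induction m with
  | zero => simp
  | succ m ih => rw [← add_assoc, choose_two_succ, choose_two_succ, ih]; ring

lemma hasSum_ite_le_sub {M : Type*} [AddCommGroup M] [TopologicalSpace M]
    [IsTopologicalAddGroup M] {f : ℕ → M} {s : M} (h : HasSum f s) (k : ℕ) :
    HasSum (fun m => if k ≤ m then f (m - k) else 0) s := by
  rw [← hasSum_nat_add_iff' k, Finset.sum_eq_zero fun i hi => if_neg (by simpa using hi),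
    sub_zero]
  simpa using h

lemma summable_of_succ_eq_mul {E g : ℕ → ℂ} {u w : ℂ} (hu : ‖u‖ ≤ 1) (hw : ‖w‖ < 1)
    (hg : Tendsto g atTop (𝓝 w)) (hE : ∀ m, E (m + 1) = E m * (u ^ m * g m)) :
    Summable E := by
  obtain ⟨r, hwr, hr⟩ := exists_between hw
  refine summable_of_ratio_norm_eventually_le hr ?_
  filter_upwards [hg.norm.eventually (gt_mem_nhds hwr)] with m hm
  rw [hE, norm_mul, norm_mul, norm_pow, mul_comm r]
  gcongr
  calc ‖u‖ ^ m * ‖g m‖ ≤ 1 * r := by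
        gcongr
        · exact pow_le_one₀ (norm_nonneg u) hu
    _ = r := one_mul r

noncomputable def outerCoeff (q u a b x y : ℂ) (n i : ℕ) : ℂ :=
  (u * q) ^ i.choose 2 * qBinom q n i *
    (qPoch q (b * x) i * (-(a * y)) ^ i / (qPoch q (a * x) i * qPoch q (b * q ^ n * x) i))

noncomputable def innerTerm (q u b x y : ℂ) (n i m : ℕ) : ℂ :=
  u ^ m.choose 2 * qPoch q (q ^ n) m * (u ^ i * b * y) ^ m /
    (qPoch q q m * qPoch q (b * q ^ (n + i) * x) m)

section

variable {q : ℂ}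

lemma qPoch_zero (a : ℂ) : qPoch q a 0 = 1 := by simp [qPoch]

lemma qPoch_succ (a : ℂ) (n : ℕ) : qPoch q a (n + 1) = qPoch q a n * (1 - a * q ^ n) :=
  Finset.prod_range_succ _ _

lemma qPoch_succ' (a : ℂ) (n : ℕ) : qPoch q a (n + 1) = (1 - a) * qPoch q (a * q) n := by
  simp only [qPoch, Finset.prod_range_succ', pow_zero, mul_one, mul_comm (1 - a)]
  congr 1
  exact Finset.prod_congr rfl fun j _ => by ring

lemma qPoch_add (a : ℂ) (m n : ℕ) :
    qPoch q a (m + n) = qPoch q a m * qPoch q (a * q ^ m) n := by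
  simp only [qPoch, Finset.prod_range_add, pow_add, mul_assoc]

lemma qPoch_ne_zero {a : ℂ} {n : ℕ} (h : ∀ j < n, 1 - a * q ^ j ≠ 0) : qPoch q a n ≠ 0 :=
  Finset.prod_ne_zero_iff.mpr fun j hj => h j (Finset.mem_range.mp hj)

lemma qPoch_self_ne_zero (hq : ‖q‖ < 1) (n : ℕ) : qPoch q q n ≠ 0 := by
  refine qPoch_ne_zero fun j _ => sub_ne_zero.mpr fun h => ?_
  have : ‖q * q ^ j‖ < 1 := by
    rw [← pow_succ', norm_pow]; exact pow_lt_one₀ (norm_nonneg _) hq (by omega)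
  rw [← h, norm_one] at this
  exact lt_irrefl _ this

lemma qPoch_sub_qPoch_mul (c : ℂ) (n : ℕ) :
    qPoch q c (n + 1) - qPoch q (c * q) (n + 1) = -c * (1 - q ^ (n + 1)) * qPoch q (c * q) n := by
  rw [qPoch_succ', qPoch_succ]; ring

lemma inv_qPoch_sub_inv_qPoch_mul {c : ℂ} {n : ℕ} (h : qPoch q c (n + 1) ≠ 0) :
    (qPoch q c n)⁻¹ - (qPoch q (c * q) n)⁻¹ = c * (1 - q ^ n) / qPoch q c (n + 1) := by
  have e₁ := qPoch_succ (q := q) c n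
  have e₂ := qPoch_succ' (q := q) c n
  rw [e₁] at h
  have h₁ : qPoch q c n ≠ 0 := left_ne_zero_of_mul h
  have h₂ : qPoch q (c * q) n ≠ 0 := right_ne_zero_of_mul (e₂ ▸ e₁ ▸ h)
  rw [inv_sub_inv h₁ h₂, e₁, div_eq_div_iff (mul_ne_zero h₁ h₂) h]
  linear_combination (-qPoch q c n) * (e₁.symm.trans e₂)

lemma qBinom_zero_right (hq : ‖q‖ < 1) (n : ℕ) : qBinom q n 0 = 1 := by
  simp [qBinom, qPoch_zero, qPoch_self_ne_zero hq]

lemma qBinom_self (hq : ‖q‖ < 1) (n : ℕ) : qBinom q n n = 1 := by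
  simp [qBinom, qPoch_zero, qPoch_self_ne_zero hq]

lemma qBinom_succ_succ (hq : ‖q‖ < 1) {m k : ℕ} (hk : k < m) :
    qBinom q (m + 1) (k + 1) = q ^ (k + 1) * qBinom q m (k + 1) + qBinom q m k := by
  obtain ⟨s, rfl⟩ : ∃ s, m = k + 1 + s := ⟨m - (k + 1), by omega⟩
  simp only [qBinom, show k + 1 + s + 1 - (k + 1) = s + 1 by omega,
    show k + 1 + s - (k + 1) = s by omega, show k + 1 + s - k = s + 1 by omega,
    qPoch_succ q (k + 1 + s), qPoch_succ q k, qPoch_succ q s]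
  have hk := qPoch_self_ne_zero hq (k + 1)
  have hs := qPoch_self_ne_zero hq (s + 1)
  rw [qPoch_succ, mul_ne_zero_iff] at hk hs
  obtain ⟨hk₁, hk₂⟩ := hk
  obtain ⟨hs₁, hs₂⟩ := hs
  field_simp
  ring

lemma sum_qBinom_succ (hq : ‖q‖ < 1) (T : ℕ → ℂ) (m : ℕ) :
    ∑ k ∈ Finset.range (m + 2), qBinom q (m + 1) k * T k =
      ∑ k ∈ Finset.range (m + 1), qBinom q m k * (q ^ k * T k + T (k + 1)) := by
  simp only [mul_add, Finset.sum_add_distrib]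
  rw [Finset.sum_range_succ', Finset.sum_range_succ,
    Finset.sum_range_succ' (fun k => qBinom q m k * (q ^ k * T k)),
    Finset.sum_range_succ (fun k => qBinom q m k * T (k + 1)),
    Finset.sum_congr rfl fun k hk => by
      rw [qBinom_succ_succ hq (Finset.mem_range.mp hk), add_mul, mul_assoc, mul_left_comm],
    Finset.sum_add_distrib]
  simp only [qBinom_zero_right hq, qBinom_self hq]
  ring

lemma Dq_sum {ι : Type*} (s : Finset ι) (f : ι → ℂ → ℂ) (x : ℂ) :
    Dq q (fun t => ∑ i ∈ s, f i t) x = ∑ i ∈ s, Dq q (f i) x := by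
  simp only [Dq, ← Finset.sum_sub_distrib, Finset.sum_div]

lemma Dq_const_mul (c : ℂ) (f : ℂ → ℂ) (x : ℂ) :
    Dq q (fun t => c * f t) x = c * Dq q f x := by
  simp only [Dq, ← mul_sub, mul_div_assoc]

lemma Dq_mul_comp_mul (f g : ℂ → ℂ) (c x : ℂ) :
    Dq q (fun t => f t * g (c * t)) x =
      f x * (c * Dq q g (c * x)) + Dq q f x * g (c * (q * x)) := by
  rcases eq_or_ne x 0 with rfl | hx
  · simp [Dq]
  rcases eq_or_ne c 0 with rfl | hc
  · simp only [Dq, zero_mul, mul_zero]; ring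
  simp only [Dq, mul_left_comm q c x]
  field_simp
  ring

lemma Dq_iterate_mul (hq : ‖q‖ < 1) (f g : ℂ → ℂ) (m : ℕ) :
    (Dq q)^[m] (fun t => f t * g t) = fun x =>
      ∑ k ∈ Finset.range (m + 1),
        qBinom q m k * ((Dq q)^[k] f x * (Dq q)^[m - k] g (q ^ k * x)) := by
  induction m with
  | zero => funext x; simp [qBinom, qPoch_zero]
  | succ m ih =>
    funext x
    rw [Function.iterate_succ_apply', ih, Dq_sum, sum_qBinom_succ hq]
    refine Finset.sum_congr rfl fun k hk => ?_
    have hkm : m + 1 - k = m - k + 1 := by have := Finset.mem_range.mp hk; omega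
    rw [Dq_const_mul, Dq_mul_comp_mul, hkm, Function.iterate_succ_apply',
      Function.iterate_succ_apply', Nat.add_sub_add_right, ← mul_assoc (q ^ k) q, ← pow_succ]
    ring

lemma Dq_iterate_qPoch (hq₀ : q ≠ 0) (hq : ‖q‖ < 1) (a : ℂ) (n k : ℕ) {x : ℂ}
    (hx : x ≠ 0) :
    (Dq q)^[k] (fun t => qPoch q (a * t) n) x =
      if k ≤ n then
        (-a) ^ k * q ^ k.choose 2 * (qPoch q q n / qPoch q q (n - k)) *
          qPoch q (a * q ^ k * x) (n - k)
      else 0 := by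
  induction k generalizing x with
  | zero => simp [div_self (qPoch_self_ne_zero hq n)]
  | succ k ih =>
    rw [Function.iterate_succ_apply', Dq, ih hx, ih (mul_ne_zero hq₀ hx)]
    by_cases hkn : k + 1 ≤ n
    · obtain ⟨j, hj⟩ : ∃ j, n - k = j + 1 := ⟨n - (k + 1), by omega⟩
      rw [if_pos (by omega), if_pos (by omega), if_pos hkn, hj, show n - (k + 1) = j by omega,
        ← mul_sub, show a * q ^ k * (q * x) = a * q ^ k * x * q by ring, qPoch_sub_qPoch_mul,
        show a * q ^ k * x * q = a * q ^ (k + 1) * x by ring, qPoch_succ q j, choose_two_succ]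
      have hj₁ := qPoch_self_ne_zero hq j
      have hj₂ : 1 - q * q ^ j ≠ 0 :=
        right_ne_zero_of_mul (qPoch_succ (q := q) q j ▸ qPoch_self_ne_zero hq (j + 1))
      have hj₃ : 1 - q ^ (j + 1) ≠ 0 := by rwa [pow_succ']
      field_simp
      ring
    · split_ifs <;> simp [show n - k = 0 by omega, qPoch_zero]

lemma Dq_iterate_inv_qPoch (hq₀ : q ≠ 0) (b : ℂ) (n m : ℕ) {x : ℂ} (hx : x ≠ 0)
    (hb : ∀ j, 1 - b * q ^ j * x ≠ 0) :
    (Dq q)^[m] (fun t => (qPoch q (b * t) n)⁻¹) x =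
      b ^ m * qPoch q (q ^ n) m / qPoch q (b * x) (n + m) := by
  induction m generalizing x with
  | zero => simp [qPoch_zero, div_eq_mul_inv]
  | succ m ih =>
    have hqx : ∀ j, 1 - b * q ^ j * (q * x) ≠ 0 := fun j => by
      simpa [pow_succ, mul_assoc, mul_comm, mul_left_comm] using hb (j + 1)
    rw [Function.iterate_succ_apply', Dq, ih hx hb, ih (mul_ne_zero hq₀ hx) hqx]
    have hN : qPoch q (b * x) (n + m + 1) ≠ 0 :=
      qPoch_ne_zero fun j _ => by simpa [mul_right_comm] using hb j
    simp only [div_eq_mul_inv (b ^ m * _), ← mul_sub, show b * (q * x) = b * x * q by ring,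
      inv_qPoch_sub_inv_qPoch_mul hN, qPoch_succ (q ^ n) m, ← pow_add, ← add_assoc]
    field_simp
    ring

lemma summable_qSeries (hq : ‖q‖ < 1) {u w : ℂ} (hu : ‖u‖ ≤ 1) (hw : ‖w‖ < 1) (n : ℕ)
    (c : ℂ) :
    Summable fun m : ℕ =>
      u ^ m.choose 2 * qPoch q (q ^ n) m * w ^ m / (qPoch q q m * qPoch q c m) := by
  set g : ℂ → ℂ := fun z => (1 - q ^ n * z) * w / ((1 - q * z) * (1 - c * z))
  have hg : Tendsto (fun m => g (q ^ m)) atTop (𝓝 w) := by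
    have hcont : ContinuousAt g 0 := by fun_prop (disch := norm_num)
    simpa [g, Function.comp_def] using
      hcont.tendsto.comp (tendsto_pow_atTop_nhds_zero_of_norm_lt_one hq)
  refine summable_of_succ_eq_mul hu hw hg fun m => ?_
  simp only [g, choose_two_succ, qPoch_succ, pow_add, pow_succ, div_eq_mul_inv, mul_inv]
  ring

lemma qPoch_mul_pow_ne_zero {c x : ℂ} {n : ℕ} (h : ∀ j < n, 1 - c * q ^ j * x ≠ 0)
    {k N : ℕ} (hkN : k + N ≤ n) : qPoch q (c * q ^ k * x) N ≠ 0 :=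
  qPoch_ne_zero fun j hj => by
    simpa [pow_add, mul_assoc, mul_comm, mul_left_comm] using h (k + j) (by omega)

lemma leibniz_term_eq (hq : ‖q‖ < 1) {a b x : ℂ} (u y : ℂ) {n : ℕ}
    (ha : ∀ j < n, 1 - a * q ^ j * x ≠ 0) (hb : ∀ j, 1 - b * q ^ j * x ≠ 0) {k : ℕ}
    (hk : k ≤ n) (j : ℕ) :
    u ^ (k + j).choose 2 * (y ^ (k + j) / qPoch q q (k + j)) *
        (qBinom q (k + j) k *
          ((-a) ^ k * q ^ k.choose 2 * (qPoch q q n / qPoch q q (n - k)) *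
              qPoch q (a * q ^ k * x) (n - k) *
            (b ^ j * qPoch q (q ^ n) j / qPoch q (b * (q ^ k * x)) (n + j)))) =
      qPoch q (a * x) n / qPoch q (b * x) n * outerCoeff q u a b x y n k *
        innerTerm q u b x y n k j := by
  have hb' : ∀ i N, qPoch q (b * q ^ i * x) N ≠ 0 := fun i N =>
    qPoch_mul_pow_ne_zero (fun j _ => hb j) (le_refl (i + N))
  have hbx : ∀ N, qPoch q (b * x) N ≠ 0 := fun N => by simpa using hb' 0 N
  have hax : qPoch q (a * x) k ≠ 0 := by
    simpa using qPoch_mul_pow_ne_zero ha (k := 0) (by omega : 0 + k ≤ n)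
  have hsplit_a : qPoch q (a * x) n = qPoch q (a * x) k * qPoch q (a * q ^ k * x) (n - k) := by
    rw [mul_right_comm a, ← qPoch_add, Nat.add_sub_cancel' hk]
  have hsplit_b : qPoch q (b * (q ^ k * x)) (n + j) =
      qPoch q (b * x) n * qPoch q (b * q ^ n * x) k / qPoch q (b * x) k *
        qPoch q (b * q ^ (n + k) * x) j := by
    have hswap : qPoch q (b * x) k * qPoch q (b * q ^ k * x) n =
        qPoch q (b * x) n * qPoch q (b * q ^ n * x) k := by
      simp only [mul_right_comm b _ x, ← qPoch_add, add_comm]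
    rw [← hswap, mul_div_cancel_left₀ _ (hbx k), show b * (q ^ k * x) = b * q ^ k * x by ring,
      qPoch_add, show b * q ^ k * x * q ^ n = b * q ^ (n + k) * x by ring]
  rw [hsplit_a, hsplit_b]
  simp only [outerCoeff, innerTerm, qBinom, choose_two_add, Nat.add_sub_cancel_left]
  field_simp [qPoch_self_ne_zero hq, hbx, hb', hax]
  ring

lemma Tq_summand_eq (hq₀ : q ≠ 0) (hq : ‖q‖ < 1) {a b x : ℂ} (u y : ℂ) {n : ℕ}
    (hx : x ≠ 0) (ha : ∀ j < n, 1 - a * q ^ j * x ≠ 0) (hb : ∀ j, 1 - b * q ^ j * x ≠ 0)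
    (m : ℕ) :
    u ^ m.choose 2 * (y ^ m / qPoch q q m) *
        (Dq q)^[m] (fun t => qPoch q (a * t) n / qPoch q (b * t) n) x =
      ∑ k ∈ Finset.range (n + 1), if k ≤ m then
        qPoch q (a * x) n / qPoch q (b * x) n * outerCoeff q u a b x y n k *
          innerTerm q u b x y n k (m - k) else 0 := by
  have hfg : (fun t => qPoch q (a * t) n / qPoch q (b * t) n) =
      fun t => qPoch q (a * t) n * (qPoch q (b * t) n)⁻¹ := by
    simp only [div_eq_mul_inv]
  rw [hfg, Dq_iterate_mul hq, Finset.mul_sum]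
  calc _ = ∑ k ∈ Finset.range (m + 1), if k ≤ n then
        qPoch q (a * x) n / qPoch q (b * x) n * outerCoeff q u a b x y n k *
          innerTerm q u b x y n k (m - k) else 0 := by
        refine Finset.sum_congr rfl fun k hk => ?_
        have hbk : ∀ j, 1 - b * q ^ j * (q ^ k * x) ≠ 0 := fun j => by
          simpa [pow_add, mul_assoc] using hb (j + k)
        rw [Dq_iterate_qPoch hq₀ hq a n k hx,
          Dq_iterate_inv_qPoch hq₀ b n (m - k) (mul_ne_zero (pow_ne_zero k hq₀) hx) hbk]
        split_ifs with hkn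
        · obtain ⟨j, rfl⟩ : ∃ j, m = k + j := ⟨m - k, by simp at hk; omega⟩
          rw [Nat.add_sub_cancel_left]
          exact leibniz_term_eq hq u y ha hb hkn j
        · simp
    _ = _ := by
        -- both sides are the sum over `k ≤ min m n`
        rw [← Finset.sum_filter, ← Finset.sum_filter]
        congr 1
        ext k
        simp only [Finset.mem_filter, Finset.mem_range]
        omega

end

theorem stmt9 (q a b x u y : ℂ) (n : ℕ)
    (hq0 : 0 < ‖q‖) (hq1 : ‖q‖ < 1)
    (hu : ‖u‖ ≤ 1) (hby : ‖b * y‖ < 1) (hx : x ≠ 0)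
    (ha : ∀ j : ℕ, j < n → 1 - a * q ^ j * x ≠ 0)
    (hb : ∀ j : ℕ, 1 - b * q ^ j * x ≠ 0) :
    (Summable fun m : ℕ =>
        u ^ (m.choose 2) * (y ^ m / qPoch q q m) *
          ((Dq q)^[m] (fun t => qPoch q (a * t) n / qPoch q (b * t) n) x)) ∧
    (∀ i : ℕ, i ≤ n →
      Summable fun m : ℕ =>
        u ^ (m.choose 2) * qPoch q (q ^ n) m * (u ^ i * b * y) ^ m /
          (qPoch q q m * qPoch q (b * q ^ (n + i) * x) m)) ∧
    Tq q u y (fun t => qPoch q (a * t) n / qPoch q (b * t) n) x =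
      qPoch q (a * x) n / qPoch q (b * x) n *
        ∑ i ∈ Finset.range (n + 1),
          (u * q) ^ (i.choose 2) * qBinom q n i *
            (qPoch q (b * x) i * (-(a * y)) ^ i /
              (qPoch q (a * x) i * qPoch q (b * q ^ n * x) i)) *
            ∑' m : ℕ,
              u ^ (m.choose 2) * qPoch q (q ^ n) m * (u ^ i * b * y) ^ m /
                (qPoch q q m * qPoch q (b * q ^ (n + i) * x) m) := by
  have hq₀ : q ≠ 0 := norm_pos_iff.mp hq0
  have hinner : ∀ i, Summable (innerTerm q u b x y n i) := fun i =>
    summable_qSeries hq1 hu (by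
      calc ‖u ^ i * b * y‖ = ‖u‖ ^ i * ‖b * y‖ := by rw [mul_assoc, norm_mul, norm_pow]
        _ ≤ 1 * ‖b * y‖ := by gcongr; exact pow_le_one₀ (norm_nonneg u) hu
        _ < 1 := by rwa [one_mul]) n _
  have hsum : HasSum
      (fun m : ℕ => u ^ m.choose 2 * (y ^ m / qPoch q q m) *
        (Dq q)^[m] (fun t => qPoch q (a * t) n / qPoch q (b * t) n) x)
      (∑ k ∈ Finset.range (n + 1), qPoch q (a * x) n / qPoch q (b * x) n *
        outerCoeff q u a b x y n k * ∑' m, innerTerm q u b x y n k m) := by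
    simp only [Tq_summand_eq hq₀ hq1 u y hx ha hb]
    exact hasSum_sum fun k _ => hasSum_ite_le_sub ((hinner k).hasSum.mul_left _) k
  refine ⟨hsum.summable, fun i _ => hinner i, ?_⟩
  rw [Tq, hsum.tsum_eq, Finset.mul_sum]
  simp only [outerCoeff, innerTerm, mul_assoc]
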